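/- arXiv:1412.0186 — 7 statements merged into one kernel-verified Lean document; each statement's English description precedes it below -/
import Mathlib

section
/- Let p be a prime and let 1 → A → B →(λ) C → 1 be a split short exact sequence with section σ : C → B such that B is a p-almost direct product of A and C. Set C' = σ(C) ⊆ B. Then for all integers m, n ≥ 1 one has [γ_m^p C', γ_n^p A] ⊆ γ_{m+n}^p A, where the commutator subgroup [γ_m^p C', γ_n^p A] is taken inside B (A being normal in B) and the filtrations γ_•^p C' and γ_•^p A are the lower F_p-linear central filtrations of the groups C' and A. -/
/-!
All commutator inclusions are proved by induction on a filtration index, treating the generators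
of `γ_{k+2}` one at a time. A commutator generator `⁅g, w⁆` is handled by the three subgroups
lemma modulo a normal subgroup, a `p`-th power `w ^ p` by `⁅w ^ p, z⁆ ≡ ⁅w, z⁆ ^ p`, valid modulo
any normal subgroup containing `⁅w, ⁅w, z⁆⁆`. The almost-direct-product hypothesis
`⁅C', A⁆ ≤ γ_2 A` starts an induction giving `⁅C', γ_k A⁆ ≤ γ_{k+1} A`, which in turn starts the
induction on `m`. Run with `C' = A`, the induction on `m` also gives
`⁅γ_j A, γ_k A⁆ ≤ γ_{j+k} A`, used in the first induction.
-/

open scoped commutatorElement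

/-- The lower `F_p`-linear central filtration `(γₙᵖ G)ₙ` of a group `G`:
`gammaP p 1 = ⊤` (i.e. `γ₁ᵖ G = G`) and `γ_{n+1}ᵖ G` is the subgroup generated by
`[G, γₙᵖ G] ∪ {xᵖ : x ∈ γₙᵖ G}`.  (The value at `0` is junk, set to `⊤`.) -/
def gammaP (p : ℕ) {G : Type*} [Group G] : ℕ → Subgroup G
  | 0 => ⊤
  | 1 => ⊤
  | n + 2 =>
    Subgroup.closure
      ({x : G | ∃ g y : G, y ∈ gammaP p (n + 1) ∧ x = ⁅g, y⁆} ∪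
       {x : G | ∃ y : G, y ∈ gammaP p (n + 1) ∧ x = y ^ p})

open Subgroup

section Commutator

variable {G : Type*} [Group G]

theorem Subgroup.commutator_le_iff_le_comap_centralizer {N : Subgroup G} [N.Normal]
    {X K : Subgroup G} :
    ⁅X, K⁆ ≤ N ↔ X ≤ (centralizer (K.map (QuotientGroup.mk' N) : Set (G ⧸ N))).comap
      (QuotientGroup.mk' N) := by
  simp only [← QuotientGroup.ker_mk' N, ← map_eq_bot_iff, map_commutator,
    commutator_eq_bot_iff_le_centralizer, map_le_iff_le_comap]

theorem Subgroup.mem_comap_centralizer_map_mk_iff {N : Subgroup G} [N.Normal] {K : Subgroup G}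
    {x : G} :
    x ∈ (centralizer (K.map (QuotientGroup.mk' N) : Set (G ⧸ N))).comap (QuotientGroup.mk' N) ↔
      ∀ z ∈ K, ⁅x, z⁆ ∈ N := by
  rw [mem_comap, mem_centralizer_iff, coe_map, Set.forall_mem_image]
  refine forall₂_congr fun z _ => ?_
  rw [← QuotientGroup.eq_one_iff, ← QuotientGroup.mk'_apply, map_commutatorElement,
    commutatorElement_eq_one_iff_commute, commute_iff_eq, eq_comm]

theorem Subgroup.commutator_commutator_le_of_rotate {N X Y Z : Subgroup G} [N.Normal]
    (h₁ : ⁅⁅Y, Z⁆, X⁆ ≤ N) (h₂ : ⁅⁅Z, X⁆, Y⁆ ≤ N) : ⁅⁅X, Y⁆, Z⁆ ≤ N := by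
  simp only [← QuotientGroup.ker_mk' N, ← map_eq_bot_iff, map_commutator] at *
  exact commutator_commutator_eq_bot_of_rotate h₁ h₂

theorem commutatorElement_pow_left_of_commute {x y : G} (h : Commute x ⁅x, y⁆) (n : ℕ) :
    ⁅x ^ n, y⁆ = ⁅x, y⁆ ^ n := by
  induction n with
  | zero => simp
  | succ n ih =>
    rw [pow_succ']
    calc ⁅x * x ^ n, y⁆ = x * ⁅x ^ n, y⁆ * x⁻¹ * ⁅x, y⁆ := by group
      _ = ⁅x, y⁆ ^ (n + 1) := by rw [ih, (h.pow_right n).eq, mul_inv_cancel_right, pow_succ]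

theorem commutatorElement_pow_left_mem {N : Subgroup G} [N.Normal] {x y : G} {n : ℕ}
    (h₁ : ⁅x, ⁅x, y⁆⁆ ∈ N) (h₂ : ⁅x, y⁆ ^ n ∈ N) : ⁅x ^ n, y⁆ ∈ N := by
  simp only [← QuotientGroup.ker_mk' N, MonoidHom.mem_ker, map_commutatorElement,
    map_pow] at *
  rw [commutatorElement_pow_left_of_commute (commutatorElement_eq_one_iff_commute.mp h₁), h₂]

end Commutator

section gammaP

variable {p : ℕ} {G H : Type*} [Group G] [Group H]

theorem commutatorElement_mem_gammaP_succ {n : ℕ} (g : G) {y : G} (hy : y ∈ gammaP p n) :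
    ⁅g, y⁆ ∈ gammaP p (n + 1) := by
  cases n with
  | zero => exact mem_top _
  | succ n => exact subset_closure (Or.inl ⟨g, y, hy, rfl⟩)

theorem pow_mem_gammaP_succ {n : ℕ} {y : G} (hy : y ∈ gammaP p n) : y ^ p ∈ gammaP p (n + 1) := by
  cases n with
  | zero => exact mem_top _
  | succ n => exact subset_closure (Or.inr ⟨y, hy, rfl⟩)

theorem map_gammaP_le (φ : G →* H) : ∀ n, (gammaP p n).map φ ≤ gammaP p n
  | 0 | 1 => le_top
  | n + 2 => by
    rw [gammaP, map_le_iff_le_comap, closure_le]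
    rintro _ (⟨g, y, hy, rfl⟩ | ⟨y, hy, rfl⟩) <;> rw [SetLike.mem_coe, mem_comap]
    · rw [map_commutatorElement]
      exact commutatorElement_mem_gammaP_succ _ (map_gammaP_le φ (n + 1) (mem_map_of_mem φ hy))
    · rw [map_pow]
      exact pow_mem_gammaP_succ (map_gammaP_le φ (n + 1) (mem_map_of_mem φ hy))

instance gammaP_characteristic (n : ℕ) : (gammaP p n : Subgroup G).Characteristic :=
  characteristic_iff_map_le.mpr fun ϕ => map_gammaP_le ϕ.toMonoidHom n

variable (p G) in
theorem gammaP_antitone : Antitone (gammaP p : ℕ → Subgroup G) := by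
  refine antitone_nat_of_succ_le fun n => ?_
  cases n with
  | zero => exact le_top
  | succ n =>
    rw [gammaP, closure_le]
    rintro _ (⟨g, y, hy, rfl⟩ | ⟨y, hy, rfl⟩)
    · exact commutator_le_right ⊤ _ (commutator_mem_commutator (mem_top g) hy)
    · exact pow_mem hy p

end gammaP

section Filtration

variable {p : ℕ} {G H : Type*} [Group G] [Group H]

theorem pow_mem_map_gammaP_succ (φ : H →* G) {n : ℕ} {x : G} (hx : x ∈ (gammaP p n).map φ) :
    x ^ p ∈ (gammaP p (n + 1)).map φ := by
  obtain ⟨y, hy, rfl⟩ := hx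
  exact ⟨y ^ p, pow_mem_gammaP_succ hy, map_pow φ y p⟩

theorem commutator_map_gammaP_add_two_le (φ : H →* G) {K N : Subgroup G} [N.Normal] (n : ℕ)
    (h₁ : ⁅⁅(gammaP p (n + 1)).map φ, K⁆, φ.range⁆ ≤ N)
    (h₂ : ⁅⁅K, φ.range⁆, (gammaP p (n + 1)).map φ⁆ ≤ N)
    (h₃ : ∀ w ∈ (gammaP p (n + 1)).map φ, ∀ z ∈ K, ⁅w, ⁅w, z⁆⁆ ∈ N ∧ ⁅w, z⁆ ^ p ∈ N) :
    ⁅(gammaP p (n + 2)).map φ, K⁆ ≤ N := by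
  rw [commutator_le_iff_le_comap_centralizer, map_le_iff_le_comap, gammaP, closure_le]
  rintro _ (⟨g, y, hy, rfl⟩ | ⟨y, hy, rfl⟩) <;> rw [SetLike.mem_coe, mem_comap]
  · have hle := commutator_le_iff_le_comap_centralizer.mp
      (commutator_commutator_le_of_rotate h₁ h₂)
    rw [map_commutatorElement]
    exact hle (commutator_mem_commutator ⟨g, rfl⟩ (mem_map_of_mem φ hy))
  · rw [map_pow, mem_comap_centralizer_map_mk_iff]
    intro z hz
    obtain ⟨h₃₁, h₃₂⟩ := h₃ _ (mem_map_of_mem φ hy) z hz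
    exact commutatorElement_pow_left_mem h₃₁ h₃₂

theorem commutator_map_gammaP_le (φ : H →* G) (N : ℕ → Subgroup G) [∀ k, (N k).Normal]
    (hN : Antitone N) (hpow : ∀ k, ∀ x ∈ N k, x ^ p ∈ N (k + 1))
    (hrange : ∀ k, ⁅φ.range, N k⁆ ≤ N (k + 1)) :
    ∀ m k, ⁅(gammaP p m).map φ, N k⁆ ≤ N (m + k) := by
  intro m
  induction m with
  | zero => exact fun k => (zero_add k).symm ▸ commutator_le_right _ _
  | succ m ih =>
    cases m with
    | zero => simpa [add_comm, gammaP, ← MonoidHom.range_eq_map] using hrange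
    | succ m =>
      intro k
      refine commutator_map_gammaP_add_two_le φ m ?_ ?_ fun w hw z hz => ⟨?_, ?_⟩
      · rw [commutator_comm]
        exact (commutator_mono le_rfl (ih k)).trans ((hrange _).trans (hN (by omega)))
      · rw [commutator_comm (N k), commutator_comm]
        exact (commutator_mono le_rfl (hrange k)).trans ((ih (k + 1)).trans (hN (by omega)))
      · have hwz : ⁅w, z⁆ ∈ N (m + 1 + k) := ih k (commutator_mem_commutator hw hz)
        exact hN (by omega) (ih _ (commutator_mem_commutator hw hwz))
      · exact hN (by omega) (hpow _ _ (ih k (commutator_mem_commutator hw hz)))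

end Filtration

section SubgroupFiltration

variable {p : ℕ} {G : Type*} [Group G]

theorem commutator_gammaP_le (j k : ℕ) :
    ⁅(gammaP p j : Subgroup G), (gammaP p k : Subgroup G)⁆ ≤ gammaP p (j + k) := by
  simpa using commutator_map_gammaP_le (MonoidHom.id G) (gammaP p) (gammaP_antitone p G)
    (fun _ _ hx => pow_mem_gammaP_succ hx) (fun _ => commutator_le.mpr fun g _ _ hy =>
      commutatorElement_mem_gammaP_succ g hy) j k

variable (A : Subgroup G)

theorem map_subtype_gammaP_antitone :
    Antitone fun k => (gammaP p k : Subgroup A).map A.subtype :=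
  (gc_map_comap A.subtype).monotone_l.comp_antitone (gammaP_antitone p A)

theorem commutator_map_subtype_gammaP_le (j k : ℕ) :
    ⁅(gammaP p j : Subgroup A).map A.subtype, (gammaP p k).map A.subtype⁆ ≤
      (gammaP p (j + k)).map A.subtype := by
  rw [← map_commutator]
  exact map_mono (commutator_gammaP_le j k)

theorem commutator_map_subtype_gammaP_succ_le [A.Normal] {K : Subgroup G}
    (hK : ⁅K, A⁆ ≤ (gammaP p 2 : Subgroup A).map A.subtype) :
    ∀ k, ⁅K, (gammaP p k : Subgroup A).map A.subtype⁆ ≤ (gammaP p (k + 1)).map A.subtype := by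
  have hA : (gammaP p 1 : Subgroup A).map A.subtype = A := by
    rw [gammaP, ← MonoidHom.range_eq_map, range_subtype]
  intro k
  induction k with
  | zero =>
    change ⁅K, (gammaP p 1 : Subgroup A).map A.subtype⁆ ≤ (gammaP p 1).map A.subtype
    rw [hA]
    exact commutator_le_right K A
  | succ k ih =>
    cases k with
    | zero => rwa [hA]
    | succ k =>
      rw [commutator_comm]
      refine commutator_map_gammaP_add_two_le A.subtype k ?_ ?_ fun w hw z hz => ⟨?_, ?_⟩
      · rw [commutator_comm _ K, MonoidHom.range_eq_map]
        exact (commutator_mono ih le_rfl).trans (commutator_map_subtype_gammaP_le A (k + 2) 1)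
      · rw [range_subtype]
        exact (commutator_mono hK le_rfl).trans ((commutator_map_subtype_gammaP_le A _ _).trans
          (map_subtype_gammaP_antitone A (by omega)))
      · have hwz : ⁅w, z⁆ ∈ (gammaP p (k + 2) : Subgroup A).map A.subtype := by
          rw [← commutatorElement_inv]
          exact inv_mem (ih (commutator_mem_commutator hz hw))
        exact map_subtype_gammaP_antitone A (by omega)
          (commutator_map_subtype_gammaP_le A _ _ (commutator_mem_commutator hw hwz))
      · rw [← commutatorElement_inv, inv_pow]
        exact inv_mem (pow_mem_map_gammaP_succ _ (ih (commutator_mem_commutator hz hw)))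

end SubgroupFiltration

theorem statement1_general (p : ℕ)
    {B C : Type*} [Group B] [Group C]
    (f : B →* C)
    (s : C →* B)
    (hadp : ∀ a ∈ f.ker, ∀ c : C,
      s c * a * (s c)⁻¹ * a⁻¹ ∈ (gammaP p 2 : Subgroup ↥f.ker).map f.ker.subtype) :
    ∀ m n : ℕ, 1 ≤ m → 1 ≤ n →
      ⁅(gammaP p m : Subgroup ↥s.range).map s.range.subtype,
        (gammaP p n : Subgroup ↥f.ker).map f.ker.subtype⁆ ≤
      (gammaP p (m + n) : Subgroup ↥f.ker).map f.ker.subtype := by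
  intro m n _ _
  have hK : ⁅s.range, f.ker⁆ ≤ (gammaP p 2 : Subgroup f.ker).map f.ker.subtype := by
    rw [commutator_le]
    rintro _ ⟨c, rfl⟩ a ha
    exact hadp a ha c
  refine commutator_map_gammaP_le s.range.subtype _ (map_subtype_gammaP_antitone f.ker)
    (fun _ _ hx => pow_mem_map_gammaP_succ _ hx) ?_ m n
  rw [range_subtype]
  exact commutator_map_subtype_gammaP_succ_le f.ker hK

/-- If `B` is a `p`-almost direct product of `A = ker f` and `C` (with section `s`), and
`C' = s(C)`, then `[γₘᵖ C', γₙᵖ A] ⊆ γ_{m+n}ᵖ A` inside `B`, for all `m, n ≥ 1`. -/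
theorem statement1 (p : ℕ) (hp : p.Prime)
    {B C : Type*} [Group B] [Group C]
    (f : B →* C) (hf : Function.Surjective f)
    (s : C →* B) (hs : ∀ c, f (s c) = c)
    (hadp : ∀ a ∈ f.ker, ∀ c : C,
      s c * a * (s c)⁻¹ * a⁻¹ ∈ (gammaP p 2 : Subgroup ↥f.ker).map f.ker.subtype) :
    ∀ m n : ℕ, 1 ≤ m → 1 ≤ n →
      ⁅(gammaP p m : Subgroup ↥s.range).map s.range.subtype,
        (gammaP p n : Subgroup ↥f.ker).map f.ker.subtype⁆ ≤
      (gammaP p (m + n) : Subgroup ↥f.ker).map f.ker.subtype :=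
  statement1_general p f s hadp
end

section
/- Let A and C be groups and φ : C → Aut(A) an action such that φ(c)(a)·a⁻¹ ∈ γ_2² A for every c ∈ C and a ∈ A (so that the semidirect product B = A ⋊_φ C is a 2-almost direct product of A and C). Then for every k ≥ 0, the k-th power of the augmentation ideal of F₂[B] decomposes as Ī(B)^k = Σ_{i+h=k} ι_A(Ī(A)^i) · ι_C(Ī(C)^h), the sum over all nonnegative integers i, h with i + h = k of the F₂-linear spans of the products ι_A(x)·ι_C(y) with x ∈ Ī(A)^i and y ∈ Ī(C)^h, with the convention that the 0-th power of an augmentation ideal is the whole group algebra. -/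
open scoped commutatorElement

/-- `γ₂² G`: the subgroup of `G` generated by all commutators and all squares. -/
def gammaTwoTwo (G : Type*) [Group G] : Subgroup G :=
  Subgroup.closure ({x : G | ∃ a b : G, x = ⁅a, b⁆} ∪ {x : G | ∃ a : G, x = a ^ 2})

/-- The augmentation ideal `Ī(G) ⊆ k[G]`, as a `k`-submodule of the group algebra:
the kernel of the augmentation map sending each group element to `1`. -/
noncomputable def augIdeal (k : Type*) (G : Type*) [CommSemiring k] [Group G] :
    Submodule k (MonoidAlgebra k G) :=
  LinearMap.ker ((MonoidAlgebra.lift k k G) 1).toLinearMap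

/-- Powers of the augmentation ideal, with the convention that the `0`-th power is
the whole group algebra. -/
noncomputable def augPow (k : Type*) (G : Type*) [CommSemiring k] [Group G] (n : ℕ) :
    Submodule k (MonoidAlgebra k G) :=
  if n = 0 then ⊤ else (augIdeal k G) ^ n

/-- The ring (algebra) homomorphism `k[G] → k[H]` induced by a group homomorphism `G → H`. -/
noncomputable def iotaHom (k : Type*) [CommSemiring k] {G H : Type*} [Group G] [Group H]
    (f : G →* H) : MonoidAlgebra k G →ₐ[k] MonoidAlgebra k H :=
  (MonoidAlgebra.lift k (MonoidAlgebra k H) G) ((MonoidAlgebra.of k H).comp f)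

/-!
Write `u_c` for the image of `c ∈ C` in `k[A ⋊ C]` and `ψ_c` for the automorphism of `k[A]`
induced by `φ c`, so that `u_c ι_A(x) = ι_A(ψ_c x) u_c`. If every `φ c a * a⁻¹` lies in the
dimension subgroup `D₂(A)`, i.e. `φ c a * a⁻¹ - 1 ∈ Ī(A)²`, then `ψ_c - id` raises the
`Ī(A)`-adic filtration by one, and
`(u_c - 1) ι_A(x) = ι_A(ψ_c x - x) u_c + ι_A(x) (u_c - 1)`
lets `ι_C(Ī(C))` move past `ι_A(Ī(A)^i)` while keeping the total degree. Hence
`ι_C(Ī(C)) S_n ⊆ S_{n+1}` for `S_n = Σ_{i+h=n} ι_A(Ī(A)^i) ι_C(Ī(C)^h)`, and since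
`b - 1 = (a - 1) + a (u_c - 1)` for `b = a u_c`, induction on `n` gives `Ī(B)^n ⊆ S_n`; the other
inclusion is clear. Over `F₂` the generators of `γ₂² A` lie in `D₂(A)`:
`[a, b] - 1 = ((a - 1)(b - 1) - (b - 1)(a - 1)) a⁻¹ b⁻¹` and `a² - 1 = (a - 1)²`.
-/

open MonoidAlgebra

section AugmentationIdeal

variable {k : Type*} [CommRing k] {G H : Type*} [Group G] [Group H]

lemma mem_augIdeal {x : MonoidAlgebra k G} : x ∈ augIdeal k G ↔ lift k k G 1 x = 0 :=
  LinearMap.mem_ker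

@[simp]
lemma augPow_zero : augPow k G 0 = ⊤ := if_pos rfl

lemma augPow_succ (n : ℕ) : augPow k G (n + 1) = augIdeal k G ^ (n + 1) :=
  if_neg n.succ_ne_zero

@[simp]
lemma augPow_one : augPow k G 1 = augIdeal k G := by
  rw [augPow_succ, pow_one]

lemma of_sub_one_mem_augIdeal (g : G) : of k G g - 1 ∈ augIdeal k G := by
  simp [mem_augIdeal]

lemma augIdeal_eq_span : augIdeal k G = Submodule.span k (Set.range fun g => of k G g - 1) := by
  refine le_antisymm (fun x hx => ?_)
    (Submodule.span_le.2 (Set.range_subset_iff.2 of_sub_one_mem_augIdeal))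
  suffices ∀ y : MonoidAlgebra k G,
      y - lift k k G 1 y • 1 ∈ Submodule.span k (Set.range fun g => of k G g - 1) by
    simpa [mem_augIdeal.1 hx] using this x
  intro y
  induction y using MonoidAlgebra.induction_on with
  | of g => simpa using Submodule.subset_span (Set.mem_range_self g)
  | add x y hx hy => simpa [add_smul, add_sub_add_comm] using add_mem hx hy
  | smul r x hx => simpa [smul_sub, smul_smul] using Submodule.smul_mem _ r hx

lemma top_mul_augIdeal_le : ⊤ * augIdeal k G ≤ augIdeal k G :=
  Submodule.mul_le.2 fun r _ x hx => by simp_all [mem_augIdeal]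

lemma augIdeal_mul_top_le : augIdeal k G * ⊤ ≤ augIdeal k G :=
  Submodule.mul_le.2 fun x hx r _ => by simp_all [mem_augIdeal]

lemma top_mul_augPow (n : ℕ) : ⊤ * augPow k G n = augPow k G n := by
  refine le_antisymm ?_ (le_mul_of_one_le_left' le_top)
  cases n with
  | zero => exact le_top
  | succ n =>
    rw [augPow_succ, pow_succ', ← mul_assoc]
    exact mul_le_mul' top_mul_augIdeal_le le_rfl

lemma augPow_mul_top (n : ℕ) : augPow k G n * ⊤ = augPow k G n := by
  refine le_antisymm ?_ (le_mul_of_one_le_right' le_top)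
  cases n with
  | zero => exact le_top
  | succ n =>
    rw [augPow_succ, pow_succ, mul_assoc]
    exact mul_le_mul' le_rfl augIdeal_mul_top_le

lemma augPow_mul (m n : ℕ) : augPow k G m * augPow k G n = augPow k G (m + n) := by
  rcases m with _ | m
  · rw [augPow_zero, top_mul_augPow, zero_add]
  rcases n with _ | n
  · rw [augPow_zero, augPow_mul_top, add_zero]
  rw [augPow_succ, augPow_succ, ← pow_add, show m + 1 + (n + 1) = m + n + 1 + 1 by omega,
    augPow_succ]

lemma mul_mem_augPow {m n : ℕ} {x y : MonoidAlgebra k G} (hx : x ∈ augPow k G m)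
    (hy : y ∈ augPow k G n) : x * y ∈ augPow k G (m + n) :=
  augPow_mul (k := k) (G := G) m n ▸ Submodule.mul_mem_mul hx hy

lemma mul_mem_augPow_left (r : MonoidAlgebra k G) {n : ℕ} {x : MonoidAlgebra k G}
    (hx : x ∈ augPow k G n) : r * x ∈ augPow k G n := by
  simpa using mul_mem_augPow (m := 0) Submodule.mem_top hx

lemma mul_mem_augPow_right (r : MonoidAlgebra k G) {n : ℕ} {x : MonoidAlgebra k G}
    (hx : x ∈ augPow k G n) : x * r ∈ augPow k G n := by
  simpa using mul_mem_augPow (n := 0) hx Submodule.mem_top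

@[simp]
lemma iotaHom_of (f : G →* H) (g : G) : iotaHom k f (of k G g) = of k H (f g) := by
  simp [iotaHom]

@[simp]
lemma lift_one_iotaHom (f : G →* H) (x : MonoidAlgebra k G) :
    lift k k H 1 (iotaHom k f x) = lift k k G 1 x := by
  induction x using MonoidAlgebra.induction_on with
  | of g => rw [iotaHom_of]; simp
  | add x y hx hy => simp [hx, hy]
  | smul r x hx => simp [hx]

lemma map_iotaHom_augIdeal_le (f : G →* H) :
    (augIdeal k G).map (iotaHom k f).toLinearMap ≤ augIdeal k H := by
  rintro _ ⟨x, hx, rfl⟩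
  simpa [mem_augIdeal] using hx

lemma map_iotaHom_augPow_le (f : G →* H) (n : ℕ) :
    (augPow k G n).map (iotaHom k f).toLinearMap ≤ augPow k H n := by
  cases n with
  | zero => simp
  | succ n =>
    rw [augPow_succ, augPow_succ, Submodule.map_pow]
    exact pow_le_pow_left' (map_iotaHom_augIdeal_le f) _

lemma iotaHom_mem_augPow (f : G →* H) {n : ℕ} {x : MonoidAlgebra k G}
    (hx : x ∈ augPow k G n) : iotaHom k f x ∈ augPow k H n :=
  map_iotaHom_augPow_le f n ⟨x, hx, rfl⟩

end AugmentationIdeal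

def dimensionSubgroup (k G : Type*) [CommRing k] [Group G] (n : ℕ) : Subgroup G where
  carrier := {g | of k G g - 1 ∈ augPow k G n}
  one_mem' := by
    show of k G 1 - 1 ∈ augPow k G n
    rw [map_one, sub_self]
    exact zero_mem _
  mul_mem' {g h} hg hh := by
    have : of k G (g * h) - 1 = (of k G g - 1) * of k G h + (of k G h - 1) := by
      rw [map_mul]; noncomm_ring
    show of k G (g * h) - 1 ∈ augPow k G n
    rw [this]
    exact add_mem (mul_mem_augPow_right _ hg) hh
  inv_mem' {g} hg := by
    have : of k G g⁻¹ - 1 = -(of k G g⁻¹ * (of k G g - 1)) := by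
      rw [mul_sub, ← map_mul, inv_mul_cancel, map_one, mul_one, neg_sub]
    show of k G g⁻¹ - 1 ∈ augPow k G n
    rw [this]
    exact neg_mem (mul_mem_augPow_left _ hg)

section DimensionSubgroup

variable {k G : Type*} [CommRing k] [Group G]

lemma mem_dimensionSubgroup {n : ℕ} {g : G} :
    g ∈ dimensionSubgroup k G n ↔ of k G g - 1 ∈ augPow k G n :=
  Iff.rfl

lemma of_sub_one_mul_of_sub_one_mem_augPow_two (a b : G) :
    (of k G a - 1) * (of k G b - 1) ∈ augPow k G 2 :=
  mul_mem_augPow (m := 1) (n := 1) (by simpa using of_sub_one_mem_augIdeal a)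
    (by simpa using of_sub_one_mem_augIdeal b)

lemma commutatorElement_mem_dimensionSubgroup_two (a b : G) :
    ⁅a, b⁆ ∈ dimensionSubgroup k G 2 := by
  have : of k G ⁅a, b⁆ - 1 = ((of k G a - 1) * (of k G b - 1) - (of k G b - 1) * (of k G a - 1))
      * of k G (a⁻¹ * b⁻¹) := by
    rw [commutatorElement_def, show a * b * a⁻¹ * b⁻¹ = a * b * (a⁻¹ * b⁻¹) by group]
    simp only [map_mul, sub_mul, mul_sub, one_mul, mul_one]
    simp only [← map_mul, show b * a * (a⁻¹ * b⁻¹) = 1 by group, map_one]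
    noncomm_ring
  rw [mem_dimensionSubgroup, this]
  exact mul_mem_augPow_right _
    (sub_mem (of_sub_one_mul_of_sub_one_mem_augPow_two a b)
      (of_sub_one_mul_of_sub_one_mem_augPow_two b a))

lemma sq_mem_dimensionSubgroup_two [CharP k 2] (a : G) : a ^ 2 ∈ dimensionSubgroup k G 2 := by
  have h2 : (2 : MonoidAlgebra k G) = 0 := by
    rw [← map_ofNat (algebraMap k (MonoidAlgebra k G)), CharTwo.two_eq_zero, map_zero]
  have : of k G (a ^ 2) - 1 = (of k G a - 1) * (of k G a - 1) := by
    have : of k G a ^ 2 - 1 - (of k G a - 1) * (of k G a - 1) = 2 * (of k G a - 1) := by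
      noncomm_ring
    rwa [h2, zero_mul, sub_eq_zero, ← map_pow] at this
  rw [mem_dimensionSubgroup, this]
  exact of_sub_one_mul_of_sub_one_mem_augPow_two a a

lemma gammaTwoTwo_le_dimensionSubgroup_two [CharP k 2] :
    gammaTwoTwo G ≤ dimensionSubgroup k G 2 := by
  refine Subgroup.closure_le _ |>.2 (Set.union_subset ?_ ?_)
  · rintro _ ⟨a, b, rfl⟩
    exact commutatorElement_mem_dimensionSubgroup_two a b
  · rintro _ ⟨a, rfl⟩
    exact sq_mem_dimensionSubgroup_two a

end DimensionSubgroup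

section Endomorphism

variable {k G : Type*} [CommRing k] [Group G] {f : G →* G}

lemma iotaHom_sub_self_mem_augPow_two (hf : ∀ g, f g * g⁻¹ ∈ dimensionSubgroup k G 2)
    {x : MonoidAlgebra k G} (hx : x ∈ augPow k G 1) : iotaHom k f x - x ∈ augPow k G 2 := by
  rw [augPow_one, augIdeal_eq_span] at hx
  induction hx using Submodule.span_induction with
  | mem _ hx =>
    obtain ⟨g, rfl⟩ := hx
    have : iotaHom k f (of k G g - 1) - (of k G g - 1)
        = (of k G (f g * g⁻¹) - 1) * of k G g := by
      rw [map_sub, map_one, iotaHom_of, sub_mul, one_mul, ← map_mul, inv_mul_cancel_right]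
      abel
    rw [this]
    exact mul_mem_augPow_right _ (hf g)
  | zero => simp
  | add x y _ _ hx hy => simpa [add_sub_add_comm] using add_mem hx hy
  | smul r x _ hx => simpa [smul_sub] using Submodule.smul_mem _ r hx

lemma iotaHom_sub_self_mem_augPow (hf : ∀ g, f g * g⁻¹ ∈ dimensionSubgroup k G 2)
    {n : ℕ} {x : MonoidAlgebra k G} (hx : x ∈ augPow k G n) :
    iotaHom k f x - x ∈ augPow k G (n + 1) := by
  induction n generalizing x with
  | zero => simp [mem_augIdeal]
  | succ n ih =>
    rw [add_comm, ← augPow_mul] at hx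
    refine Submodule.mul_induction_on hx (fun u hu v hv => ?_) (fun x y hx hy => ?_)
    · have : iotaHom k f (u * v) - u * v
          = (iotaHom k f u - u) * iotaHom k f v + u * (iotaHom k f v - v) := by
        rw [map_mul]; noncomm_ring
      rw [this]
      refine add_mem ?_ ?_
      · have := mul_mem_augPow (iotaHom_sub_self_mem_augPow_two hf hu)
          (iotaHom_mem_augPow f hv)
        rwa [add_comm 2] at this
      · exact add_comm 1 (n + 1) ▸ mul_mem_augPow hu (ih hv)
    · simpa [add_sub_add_comm] using add_mem hx hy

end Endomorphism

section SemidirectProduct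

open SemidirectProduct

variable (k : Type*) [CommRing k] {A C : Type*} [Group A] [Group C] (φ : C →* MulAut A)

noncomputable def inlAugPow (i : ℕ) : Submodule k (MonoidAlgebra k (A ⋊[φ] C)) :=
  (augPow k A i).map (iotaHom k inl).toLinearMap

noncomputable def inrAugPow (h : ℕ) : Submodule k (MonoidAlgebra k (A ⋊[φ] C)) :=
  (augPow k C h).map (iotaHom k inr).toLinearMap

noncomputable def mixedAugPow (m : ℕ) : Submodule k (MonoidAlgebra k (A ⋊[φ] C)) :=
  ⨆ i ∈ Finset.range (m + 1), inlAugPow k φ i * inrAugPow k φ (m - i)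

variable {k φ}

lemma inlAugPow_mul (i j : ℕ) : inlAugPow k φ i * inlAugPow k φ j = inlAugPow k φ (i + j) := by
  rw [inlAugPow, inlAugPow, inlAugPow, ← Submodule.map_mul, augPow_mul]

lemma inrAugPow_mul (i j : ℕ) : inrAugPow k φ i * inrAugPow k φ j = inrAugPow k φ (i + j) := by
  rw [inrAugPow, inrAugPow, inrAugPow, ← Submodule.map_mul, augPow_mul]

lemma inrAugPow_one_eq_span :
    inrAugPow k φ 1 = Submodule.span k (Set.range fun c => of k (A ⋊[φ] C) (inr c) - 1) := by
  rw [inrAugPow, augPow_one, augIdeal_eq_span, Submodule.map_span, ← Set.range_comp]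
  simp only [Function.comp_def, AlgHom.toLinearMap_apply, map_sub, map_one, iotaHom_of]

lemma le_mixedAugPow {i j m : ℕ} (h : i + j = m) :
    inlAugPow k φ i * inrAugPow k φ j ≤ mixedAugPow k φ m := by
  obtain rfl : j = m - i := by omega
  exact le_iSup₂_of_le (f := fun i _ => inlAugPow k φ i * inrAugPow k φ (m - i)) i
    (Finset.mem_range.2 (by omega)) le_rfl

lemma mixedAugPow_le_augPow (m : ℕ) : mixedAugPow k φ m ≤ augPow k (A ⋊[φ] C) m := by
  refine iSup₂_le fun i hi => ?_
  calc inlAugPow k φ i * inrAugPow k φ (m - i)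
      ≤ augPow k (A ⋊[φ] C) i * augPow k (A ⋊[φ] C) (m - i) :=
        mul_le_mul' (map_iotaHom_augPow_le _ i) (map_iotaHom_augPow_le _ (m - i))
    _ = augPow k (A ⋊[φ] C) m := by
        rw [augPow_mul, Nat.add_sub_cancel' (Finset.mem_range_succ_iff.1 hi)]

lemma top_le_mixedAugPow_zero : ⊤ ≤ mixedAugPow k φ 0 := by
  suffices ∀ x, x ∈ inlAugPow k φ 0 * inrAugPow k φ 0 from
    fun x _ => le_mixedAugPow (add_zero 0) (this x)
  intro x
  induction x using MonoidAlgebra.induction_on with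
  | of b =>
    rw [← inl_left_mul_inr_right b, map_mul]
    exact Submodule.mul_mem_mul ⟨of k A b.left, Submodule.mem_top, iotaHom_of _ _⟩
      ⟨of k C b.right, Submodule.mem_top, iotaHom_of _ _⟩
  | add x y hx hy => exact add_mem hx hy
  | smul r x hx => exact Submodule.smul_mem _ r hx

lemma augIdeal_semidirectProduct_le :
    augIdeal k (A ⋊[φ] C) ≤ inlAugPow k φ 1 ⊔ inlAugPow k φ 0 * inrAugPow k φ 1 := by
  rw [augIdeal_eq_span, Submodule.span_le]
  rintro _ ⟨b, rfl⟩
  have : of k (A ⋊[φ] C) b - 1 = iotaHom k inl (of k A b.left - 1)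
      + iotaHom k inl (of k A b.left) * iotaHom k inr (of k C b.right - 1) := by
    conv_lhs => rw [← inl_left_mul_inr_right b]
    simp only [map_sub, map_one, iotaHom_of, map_mul]
    noncomm_ring
  show of k (A ⋊[φ] C) b - 1 ∈ _
  rw [this]
  refine add_mem (Submodule.mem_sup_left ⟨_, by simpa using of_sub_one_mem_augIdeal _, rfl⟩)
    (Submodule.mem_sup_right (Submodule.mul_mem_mul ⟨_, by simp, rfl⟩ ⟨_, ?_, rfl⟩))
  simpa using of_sub_one_mem_augIdeal _

lemma of_inr_mul_iotaHom_inl (c : C) (x : MonoidAlgebra k A) :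
    of k (A ⋊[φ] C) (inr c) * iotaHom k inl x
      = iotaHom k inl (iotaHom k (φ c).toMonoidHom x) * of k (A ⋊[φ] C) (inr c) := by
  induction x using MonoidAlgebra.induction_on with
  | of a =>
    simp only [iotaHom_of, ← map_mul, MulEquiv.coe_toMonoidHom, inl_aut, map_inv,
      inv_mul_cancel_right]
  | add x y hx hy => simp only [map_add, mul_add, add_mul, hx, hy]
  | smul r x hx => simp only [map_smul, mul_smul_comm, smul_mul_assoc, hx]

lemma inrAugPow_one_mul_inlAugPow_le (hφ : ∀ c a, φ c a * a⁻¹ ∈ dimensionSubgroup k A 2)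
    (i : ℕ) : inrAugPow k φ 1 * inlAugPow k φ i
      ≤ inlAugPow k φ (i + 1) * inrAugPow k φ 0 ⊔ inlAugPow k φ i * inrAugPow k φ 1 := by
  conv_lhs => rw [inrAugPow_one_eq_span, ← Submodule.span_eq (inlAugPow k φ i),
    Submodule.span_mul_span]
  rw [Submodule.span_le]
  rintro _ ⟨_, ⟨c, rfl⟩, _, ⟨x, hx, rfl⟩, rfl⟩
  have : (of k (A ⋊[φ] C) (inr c) - 1) * iotaHom k inl x
      = iotaHom k inl (iotaHom k (φ c).toMonoidHom x - x) * of k (A ⋊[φ] C) (inr c)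
        + iotaHom k inl x * (of k (A ⋊[φ] C) (inr c) - 1) := by
    simp only [sub_mul, mul_sub, one_mul, mul_one, map_sub, of_inr_mul_iotaHom_inl]
    abel
  simp only [SetLike.mem_coe, AlgHom.toLinearMap_apply] at hx ⊢
  rw [this]
  have hψ : iotaHom k inl (iotaHom k (φ c).toMonoidHom x - x) ∈ inlAugPow k φ (i + 1) :=
    Submodule.mem_map_of_mem (f := (iotaHom k inl).toLinearMap)
      (iotaHom_sub_self_mem_augPow (f := (φ c).toMonoidHom) (fun a => hφ c a) hx)
  have hx' : iotaHom k inl x ∈ inlAugPow k φ i :=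
    Submodule.mem_map_of_mem (f := (iotaHom k inl).toLinearMap) hx
  have hu : of k (A ⋊[φ] C) (inr c) ∈ inrAugPow k φ 0 :=
    ⟨of k C c, Submodule.mem_top, iotaHom_of _ _⟩
  have hu₁ : of k (A ⋊[φ] C) (inr c) - 1 ∈ inrAugPow k φ 1 := by
    rw [inrAugPow_one_eq_span]
    exact Submodule.subset_span ⟨c, rfl⟩
  exact add_mem (Submodule.mem_sup_left (Submodule.mul_mem_mul hψ hu))
    (Submodule.mem_sup_right (Submodule.mul_mem_mul hx' hu₁))

lemma inlAugPow_mul_mixedAugPow_le (i n : ℕ) :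
    inlAugPow k φ i * mixedAugPow k φ n ≤ mixedAugPow k φ (i + n) := by
  simp only [mixedAugPow, Submodule.mul_iSup]
  refine iSup₂_le fun j hj => ?_
  rw [← mul_assoc, inlAugPow_mul]
  exact le_mixedAugPow (by have := Finset.mem_range_succ_iff.1 hj; omega)

lemma inrAugPow_one_mul_mixedAugPow_le (hφ : ∀ c a, φ c a * a⁻¹ ∈ dimensionSubgroup k A 2)
    (n : ℕ) : inrAugPow k φ 1 * mixedAugPow k φ n ≤ mixedAugPow k φ (n + 1) := by
  simp only [mixedAugPow, Submodule.mul_iSup]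
  refine iSup₂_le fun i hi => ?_
  have hi := Finset.mem_range_succ_iff.1 hi
  calc inrAugPow k φ 1 * (inlAugPow k φ i * inrAugPow k φ (n - i))
      ≤ (inlAugPow k φ (i + 1) * inrAugPow k φ 0 ⊔ inlAugPow k φ i * inrAugPow k φ 1)
          * inrAugPow k φ (n - i) := by
        rw [← mul_assoc]
        exact mul_le_mul' (inrAugPow_one_mul_inlAugPow_le hφ i) le_rfl
    _ = inlAugPow k φ (i + 1) * inrAugPow k φ (0 + (n - i))
          ⊔ inlAugPow k φ i * inrAugPow k φ (1 + (n - i)) := by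
        rw [Submodule.sup_mul, mul_assoc, mul_assoc, inrAugPow_mul, inrAugPow_mul]
    _ ≤ mixedAugPow k φ (n + 1) :=
        sup_le (le_mixedAugPow (by omega)) (le_mixedAugPow (by omega))

theorem augPow_semidirectProduct_eq_mixedAugPow
    (hφ : ∀ c a, φ c a * a⁻¹ ∈ dimensionSubgroup k A 2) (n : ℕ) :
    augPow k (A ⋊[φ] C) n = mixedAugPow k φ n := by
  refine le_antisymm ?_ (mixedAugPow_le_augPow n)
  induction n with
  | zero => exact top_le_mixedAugPow_zero
  | succ n ih =>
    calc augPow k (A ⋊[φ] C) (n + 1) = augIdeal k (A ⋊[φ] C) * augPow k (A ⋊[φ] C) n := by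
          rw [← augPow_one, augPow_mul, add_comm]
      _ ≤ (inlAugPow k φ 1 ⊔ inlAugPow k φ 0 * inrAugPow k φ 1) * mixedAugPow k φ n :=
          mul_le_mul' augIdeal_semidirectProduct_le ih
      _ = inlAugPow k φ 1 * mixedAugPow k φ n
            ⊔ inlAugPow k φ 0 * (inrAugPow k φ 1 * mixedAugPow k φ n) := by
          rw [Submodule.sup_mul, mul_assoc]
      _ ≤ mixedAugPow k φ (n + 1) := by
          refine sup_le ((inlAugPow_mul_mixedAugPow_le 1 n).trans_eq (by rw [add_comm])) ?_
          exact (mul_le_mul' le_rfl (inrAugPow_one_mul_mixedAugPow_le hφ n)).trans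
            ((inlAugPow_mul_mixedAugPow_le 0 (n + 1)).trans_eq (by rw [zero_add]))

end SemidirectProduct

/-- For a `2`-almost direct product `B = A ⋊[φ] C`, the `k`-th power of the augmentation
ideal of `F₂[B]` decomposes as `Ī(B)^k = Σ_{i+h=k} ι_A(Ī(A)^i) · ι_C(Ī(C)^h)`. -/
theorem statement5 {A C : Type*} [Group A] [Group C] (φ : C →* MulAut A)
    (hφ : ∀ (c : C) (a : A), φ c a * a⁻¹ ∈ gammaTwoTwo A) (k : ℕ) :
    augPow (ZMod 2) (A ⋊[φ] C) k =
      ⨆ i ∈ Finset.range (k + 1),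
        (augPow (ZMod 2) A i).map (iotaHom (ZMod 2) (SemidirectProduct.inl)).toLinearMap *
        (augPow (ZMod 2) C (k - i)).map (iotaHom (ZMod 2) (SemidirectProduct.inr)).toLinearMap :=
  augPow_semidirectProduct_eq_mixedAugPow
    (fun c a => gammaTwoTwo_le_dimensionSubgroup_two (hφ c a)) k
end

section
/- The fundamental group of the Klein bottle, i.e. the group with presentation ⟨a, b | a b a⁻¹ = b⁻¹⟩, equivalently the semidirect product ℤ ⋊ ℤ in which the generator of the acting copy of ℤ acts on ℤ by negation, is residually 2-finite. -/
/-!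
The Klein bottle group is generated by `t = (1, 0)` and `s = (0, 1)` subject to
`s t s⁻¹ = t⁻¹`, so `t ↦ (r 1, 0)`, `s ↦ (sr 0, 1)` defines a homomorphism to the 2-group
`D_{2^k} × ℤ/2^k`. If `(b, a)` lies in its kernel then `2^k ∣ a`, so `a` is even and the
reflection `sr 0` disappears from the image; what is left is the rotation `r b`, hence also
`2^k ∣ b`. A nontrivial element escapes this kernel once `k` exceeds the 2-adic valuation of a
nonzero coordinate.
-/

/-- A group `G` is residually `p`-finite if every nontrivial element is detected by a
homomorphism onto a finite `p`-group. -/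
def IsResiduallyPFinite (p : ℕ) (G : Type*) [Group G] : Prop :=
  ∀ g : G, g ≠ 1 →
    ∃ (H : Type) (_ : Group H) (_ : Finite H) (φ : G →* H), IsPGroup p H ∧ φ g ≠ 1

/-- The action of `ℤ` on `ℤ` in which the generator acts by negation (written
multiplicatively: the generator of `Multiplicative ℤ` acts by inversion). -/
def kleinAction : Multiplicative ℤ →* MulAut (Multiplicative ℤ) :=
  zpowersHom (MulAut (Multiplicative ℤ)) (MulEquiv.inv (Multiplicative ℤ))

open Multiplicative DihedralGroup

namespace SemidirectProduct

variable {N G H : Type*} [Group N] [Group G] [Group H] {φ : G →* MulAut N}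

theorem lift_compat_of_closure_eq_top (f₁ : N →* H) (f₂ : G →* H) {S : Set G}
    (hS : Subgroup.closure S = ⊤)
    (h : ∀ g ∈ S, ∀ n, f₁ (φ g n) = f₂ g * f₁ n * (f₂ g)⁻¹)
    (g : G) : f₁.comp (φ g).toMonoidHom = (MulAut.conj (f₂ g)).toMonoidHom.comp f₁ := by
  ext n
  change f₁ (φ g n) = f₂ g * f₁ n * (f₂ g)⁻¹
  induction (hS ▸ Subgroup.mem_top g : g ∈ Subgroup.closure S) using Subgroup.closure_induction
    generalizing n with
  | mem g hg => exact h g hg n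
  | one => simp
  | mul g g' _ _ ih ih' => simp [ih, ih', mul_assoc]
  | inv g _ ih =>
    have key := ih ((φ g)⁻¹ n)
    rw [MulAut.apply_inv_self] at key
    rw [map_inv, map_inv, key]
    group

end SemidirectProduct

theorem Int.closure_ofAdd_one : Subgroup.closure {ofAdd (1 : ℤ)} = ⊤ := by
  rw [← Subgroup.zpowers_eq_closure, eq_top_iff]
  exact fun g _ => ⟨toAdd g, by simp [← ofAdd_zsmul]⟩

section KleinBottle

variable {H : Type*} [Group H]

def kleinLift (t s : H) (h : s * t * s⁻¹ = t⁻¹) :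
    Multiplicative ℤ ⋊[kleinAction] Multiplicative ℤ →* H :=
  SemidirectProduct.lift (zpowersHom H t) (zpowersHom H s) <|
    SemidirectProduct.lift_compat_of_closure_eq_top _ _ Int.closure_ofAdd_one <| by
      rintro _ rfl n
      simp only [kleinAction, zpowersHom_apply, toAdd_ofAdd, zpow_one, MulEquiv.inv_apply,
        toAdd_inv, zpow_neg]
      rw [← MulAut.conj_apply, map_zpow, MulAut.conj_apply, h, inv_zpow]

theorem kleinLift_mk (t s : H) (h : s * t * s⁻¹ = t⁻¹) (b a : Multiplicative ℤ) :
    kleinLift t s h ⟨b, a⟩ = t ^ toAdd b * s ^ toAdd a := by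
  simp [kleinLift, SemidirectProduct.mk_eq_inl_mul_inr]

end KleinBottle

def kleinToDihedral (n : ℕ) :
    Multiplicative ℤ ⋊[kleinAction] Multiplicative ℤ →*
      DihedralGroup n × Multiplicative (ZMod n) :=
  kleinLift (r 1, 1) (sr 0, ofAdd 1) (by simp [sr_mul_r, sr_mul_sr])

theorem dvd_of_kleinToDihedral_eq_one {n : ℕ} (hn : 2 ∣ n) {b a : Multiplicative ℤ}
    (h : kleinToDihedral n ⟨b, a⟩ = 1) : (n : ℤ) ∣ toAdd b ∧ (n : ℤ) ∣ toAdd a := by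
  obtain ⟨hrot, hred⟩ := Prod.ext_iff.1 h
  simp only [kleinToDihedral, kleinLift_mk, Prod.fst_mul, Prod.snd_mul, Prod.pow_fst,
    Prod.pow_snd, r_one_zpow, one_zpow, one_mul, Prod.fst_one, Prod.snd_one] at hrot hred
  have ha : (n : ℤ) ∣ toAdd a := by
    rwa [← ofAdd_zsmul, ofAdd_eq_one, zsmul_one, ZMod.intCast_zmod_eq_zero_iff_dvd] at hred
  have hsa : sr (0 : ZMod n) ^ toAdd a = 1 := by
    rw [← orderOf_dvd_iff_zpow_eq_one, orderOf_sr]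
    exact (Int.natCast_dvd_natCast.2 hn).trans ha
  rw [hsa, mul_one, one_def, r.injEq, ZMod.intCast_zmod_eq_zero_iff_dvd] at hrot
  exact ⟨hrot, ha⟩

theorem isPGroup_dihedralGroup_prod (k : ℕ) :
    IsPGroup 2 (DihedralGroup (2 ^ k) × Multiplicative (ZMod (2 ^ k))) :=
  IsPGroup.of_card (n := 2 * k + 1) <| by
    rw [Nat.card_prod, DihedralGroup.nat_card, Nat.card_eq_fintype_card,
      Fintype.card_multiplicative, ZMod.card]
    ring

/-- The fundamental group of the Klein bottle, `⟨a, b | a b a⁻¹ = b⁻¹⟩ ≅ ℤ ⋊ ℤ` with the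
generator of the acting `ℤ` acting by negation, is residually 2-finite. -/
theorem statement9 :
    IsResiduallyPFinite 2 (Multiplicative ℤ ⋊[kleinAction] Multiplicative ℤ) := by
  rintro ⟨b, a⟩ hg
  have hne : toAdd b ≠ 0 ∨ toAdd a ≠ 0 := by
    contrapose! hg
    ext <;> simp [hg]
  obtain ⟨k, hk⟩ :
      ∃ k, ¬ ((2 : ℤ) ^ (k + 1) ∣ toAdd b ∧ (2 : ℤ) ^ (k + 1) ∣ toAdd a) := by
    rcases hne with h | h
    · obtain ⟨k, hk⟩ := (Int.finiteMultiplicity_iff (a := 2)).2 ⟨by norm_num, h⟩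
      exact ⟨k, fun hd => hk hd.1⟩
    · obtain ⟨k, hk⟩ := (Int.finiteMultiplicity_iff (a := 2)).2 ⟨by norm_num, h⟩
      exact ⟨k, fun hd => hk hd.2⟩
  refine ⟨_, inferInstance, inferInstance, kleinToDihedral (2 ^ (k + 1)),
    isPGroup_dihedralGroup_prod _, fun h => hk ?_⟩
  exact_mod_cast dvd_of_kleinToDihedral_eq_one (dvd_pow_self 2 k.succ_ne_zero) h
end

section
/- Fix integers n ≥ 1 and g ≥ 2. Let G be a group with elements B_{i,j} (1 ≤ i < j ≤ n) and ρ_{k,l} (1 ≤ k ≤ n, 1 ≤ l ≤ g) satisfying: (b₁): ρ_{i,k} ρ_{j,l} ρ_{i,k}⁻¹ = ρ_{j,l} for all 1 ≤ i < j ≤ n and 1 ≤ k < l ≤ g; (d₁): ρ_{k,l} B_{i,j} ρ_{k,l}⁻¹ = B_{i,j} for all 1 ≤ i < j ≤ n, 1 ≤ l ≤ g and all k with k < i or j < k; and (e): ρ_{i,k}⁻¹ ρ_{j,k} ρ_{i,k} ρ_{j,k}⁻¹ = B_{i,j}⁻¹ for all 1 ≤ i < j ≤ n and 1 ≤ k ≤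 g. Set a_k = ρ_{k,g−1} ρ_{k,g}, U = a_n a_{n−1} ⋯ a_2 and T_1 = B_{1,2} B_{1,3} ⋯ B_{1,n}. Then ρ_{1,g−1}⁻¹ U ρ_{1,g−1} = T_1⁻¹ U. -/
/-!
Conjugation by `r = ρ_{1,g-1}` is an automorphism. By (e) and (b₁) it sends each factor `a_k`
of `U` to `B_{1,k}⁻¹ a_k`, and by (d₁) each `B_{1,k}⁻¹` commutes with the factors `a_l`, `l > k`,
standing to its left in `U`, so all of them can be collected in front, where they form `T₁⁻¹`.
-/

theorem List.prod_map_mul_of_pairwise_commute {ι M : Type*} [Monoid M] (f g : ι → M) :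
    ∀ {l : List ι}, l.Pairwise (fun i j => Commute (f j) (g i)) →
      (l.map fun i => f i * g i).prod = (l.map f).prod * (l.map g).prod
  | [], _ => by simp
  | i :: l, h => by
    rw [List.pairwise_cons] at h
    have hcomm : Commute (g i) (l.map f).prod :=
      Commute.list_prod_right _ _ fun x hx => by
        obtain ⟨j, hj, rfl⟩ := List.mem_map.mp hx
        exact (h.1 j hj).symm
    simp only [List.map_cons, List.prod_cons, prod_map_mul_of_pairwise_commute f g h.2]
    rw [mul_assoc, ← mul_assoc (g i), hcomm.eq]
    simp only [mul_assoc]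

theorem List.map_range_sub_eq_map_reverse_range' {α : Type*} (f : ℕ → α) (n : ℕ) :
    (List.range (n - 1)).map (fun i => f (n - i)) = (List.range' 2 (n - 1)).reverse.map f := by
  rw [List.reverse_range', List.map_map]
  exact List.map_congr_left fun i hi => by
    simp only [List.mem_range] at hi
    simp only [Function.comp_apply]
    congr 1
    omega

theorem List.prod_map_range_add_two_inv {G : Type*} [Group G] (f : ℕ → G) (m : ℕ) :
    ((List.range m).map fun i => f (i + 2)).prod⁻¹
      = ((List.range' 2 m).reverse.map fun k => (f k)⁻¹).prod := by
  simp only [List.prod_inv_reverse, List.range'_eq_map_range, List.map_map, List.map_reverse,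
    Function.comp_def, Nat.add_comm 2]

theorem conj_mul_eq_of_conj_eq_of_commute {G : Type*} [Group G] {r x y c : G}
    (hx : r⁻¹ * x * r = c * x) (hy : Commute r y) : r⁻¹ * (x * y) * r = c * (x * y) := by
  calc r⁻¹ * (x * y) * r = (r⁻¹ * x * r) * (r⁻¹ * y * r) := by group
    _ = c * (x * y) := by rw [hx, hy.inv_left.eq]; group

theorem statement11_general {G : Type*} [Group G] (n g : ℕ) (hg : 2 ≤ g)
    (B : ℕ → ℕ → G) (ρ : ℕ → ℕ → G)
    (hb1 : ∀ i j k l, 1 ≤ i → i < j → j ≤ n → 1 ≤ k → k < l → l ≤ g →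
      ρ i k * ρ j l * (ρ i k)⁻¹ = ρ j l)
    (hd1 : ∀ i j k l, 1 ≤ i → i < j → j ≤ n → 1 ≤ k → k ≤ n → 1 ≤ l → l ≤ g →
      (k < i ∨ j < k) → ρ k l * B i j * (ρ k l)⁻¹ = B i j)
    (he : ∀ i j k, 1 ≤ i → i < j → j ≤ n → 1 ≤ k → k ≤ g →
      (ρ i k)⁻¹ * ρ j k * ρ i k * (ρ j k)⁻¹ = (B i j)⁻¹)
    (a : ℕ → G) (ha : ∀ k, a k = ρ k (g - 1) * ρ k g)
    (U : G) (hU : U = (((List.range (n - 1)).map fun i => a (n - i)).prod))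
    (T : G) (hT : T = (((List.range (n - 1)).map fun i => B 1 (i + 2)).prod)) :
    (ρ 1 (g - 1))⁻¹ * U * ρ 1 (g - 1) = T⁻¹ * U := by
  set r := ρ 1 (g - 1)
  set L := (List.range' 2 (n - 1)).reverse
  have mem_L {k : ℕ} (hk : k ∈ L) : 2 ≤ k ∧ k ≤ n := by
    simp only [L, List.mem_reverse, List.mem_range'_1] at hk; omega
  have hUL : U = (L.map a).prod := by rw [hU, List.map_range_sub_eq_map_reverse_range']
  have hTL : T⁻¹ = (L.map fun k => (B 1 k)⁻¹).prod := by rw [hT, List.prod_map_range_add_two_inv]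
  have conj_a : ∀ k ∈ L, r⁻¹ * a k * r = (B 1 k)⁻¹ * a k := fun k hk => by
    obtain ⟨hk2, hkn⟩ := mem_L hk
    rw [ha]
    exact conj_mul_eq_of_conj_eq_of_commute
      (mul_inv_eq_iff_eq_mul.mp (he 1 k (g - 1) le_rfl (by omega) hkn (by omega) (by omega)))
      (mul_inv_eq_iff_eq_mul.mp
        (hb1 1 k (g - 1) g le_rfl (by omega) hkn (by omega) (by omega) le_rfl))
  have comm : L.Pairwise fun i j => Commute (B 1 j)⁻¹ (a i) := by
    refine (List.pairwise_reverse.mpr (List.pairwise_lt_range' (s := 2))).imp_of_mem ?_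
    intro i j hi hj hji
    obtain ⟨-, hin⟩ := mem_L hi
    obtain ⟨hj2, -⟩ := mem_L hj
    have commute_rho (l : ℕ) (hl1 : 1 ≤ l) (hlg : l ≤ g) : Commute (ρ i l) (B 1 j) :=
      mul_inv_eq_iff_eq_mul.mp
        (hd1 1 j i l le_rfl (by omega) (by omega) (by omega) hin hl1 hlg (Or.inr hji))
    rw [ha]
    exact ((commute_rho (g - 1) (by omega) (by omega)).symm.mul_right
      (commute_rho g (by omega) le_rfl).symm).inv_left
  calc r⁻¹ * U * r = MulAut.conj r⁻¹ U := by simp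
    _ = (L.map fun k => (B 1 k)⁻¹ * a k).prod := by
      rw [hUL, map_list_prod, List.map_map]
      exact congrArg _ (List.map_congr_left fun k hk => by simpa using conj_a k hk)
    _ = T⁻¹ * U := by rw [List.prod_map_mul_of_pairwise_commute _ _ comm, hTL, hUL]

/-- Relation (f₂): in a group with elements `B i j` (`1 ≤ i < j ≤ n`) and `ρ k l`
(`1 ≤ k ≤ n`, `1 ≤ l ≤ g`) satisfying relations (b₁), (d₁) and (e), one has
`ρ_{1,g-1}⁻¹ U ρ_{1,g-1} = T₁⁻¹ U`, where `aₖ = ρ_{k,g-1} ρ_{k,g}`,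
`U = aₙ a_{n-1} ⋯ a₂` and `T₁ = B_{1,2} B_{1,3} ⋯ B_{1,n}`. -/
theorem statement11 {G : Type*} [Group G] (n g : ℕ) (hn : 1 ≤ n) (hg : 2 ≤ g)
    (B : ℕ → ℕ → G) (ρ : ℕ → ℕ → G)
    (hb1 : ∀ i j k l, 1 ≤ i → i < j → j ≤ n → 1 ≤ k → k < l → l ≤ g →
      ρ i k * ρ j l * (ρ i k)⁻¹ = ρ j l)
    (hd1 : ∀ i j k l, 1 ≤ i → i < j → j ≤ n → 1 ≤ k → k ≤ n → 1 ≤ l → l ≤ g →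
      (k < i ∨ j < k) → ρ k l * B i j * (ρ k l)⁻¹ = B i j)
    (he : ∀ i j k, 1 ≤ i → i < j → j ≤ n → 1 ≤ k → k ≤ g →
      (ρ i k)⁻¹ * ρ j k * ρ i k * (ρ j k)⁻¹ = (B i j)⁻¹)
    (a : ℕ → G) (ha : ∀ k, a k = ρ k (g - 1) * ρ k g)
    (U : G) (hU : U = (((List.range (n - 1)).map fun i => a (n - i)).prod))
    (T : G) (hT : T = (((List.range (n - 1)).map fun i => B 1 (i + 2)).prod)) :
    (ρ 1 (g - 1))⁻¹ * U * ρ 1 (g - 1) = T⁻¹ * U :=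
  statement11_general n g hg B ρ hb1 hd1 he a ha U hU T hT
end

section
/- Fix integers n ≥ 1 and g ≥ 2. Let G be a group with elements B_{i,j} (1 ≤ i < j ≤ n) and ρ_{k,l} (1 ≤ k ≤ n, 1 ≤ l ≤ g) satisfying: (b₁): ρ_{i,k} ρ_{j,l} ρ_{i,k}⁻¹ = ρ_{j,l} for all 1 ≤ i < j ≤ n and 1 ≤ k < l ≤ g; and (d₂): ρ_{i,l} B_{i,j} ρ_{i,l}⁻¹ = ρ_{j,l}⁻¹ B_{i,j}⁻¹ ρ_{j,l} for all 1 ≤ i < j ≤ n and 1 ≤ l ≤ g. Set a_k = ρ_{k,g−1} ρ_{k,g}. Then for all 1 ≤ j < k ≤ n one has a_j B_{j,k} a_j⁻¹ = a_k⁻¹ B_{j,k} a_k. -/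
/-- Each of `x`, `y` inverts `b` up to conjugation; composing them, the two inversions cancel,
and `x` commuting with `v` lets the conjugators be collected into `u * v`. -/
theorem mul_conj_eq_of_conj_eq_inv_conj {G : Type*} [Group G] {x y u v b : G}
    (hxv : x * v * x⁻¹ = v) (hx : x * b * x⁻¹ = u⁻¹ * b⁻¹ * u)
    (hy : y * b * y⁻¹ = v⁻¹ * b⁻¹ * v) :
    x * y * b * (x * y)⁻¹ = (u * v)⁻¹ * b * (u * v) := by
  have hx_inv : x * b⁻¹ * x⁻¹ = u⁻¹ * b * u := by
    rw [show x * b⁻¹ * x⁻¹ = (x * b * x⁻¹)⁻¹ by group, hx]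
    group
  calc x * y * b * (x * y)⁻¹
      = x * (y * b * y⁻¹) * x⁻¹ := by group
    _ = (x * v * x⁻¹)⁻¹ * (x * b⁻¹ * x⁻¹) * (x * v * x⁻¹) := by rw [hy]; group
    _ = (u * v)⁻¹ * b * (u * v) := by rw [hxv, hx_inv]; group

theorem statement12_general {G : Type*} [Group G] (n g : ℕ) (hg : 2 ≤ g)
    (B : ℕ → ℕ → G) (ρ : ℕ → ℕ → G)
    (hb1 : ∀ i j k l, 1 ≤ i → i < j → j ≤ n → 1 ≤ k → k < l → l ≤ g →
      ρ i k * ρ j l * (ρ i k)⁻¹ = ρ j l)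
    (hd2 : ∀ i j l, 1 ≤ i → i < j → j ≤ n → 1 ≤ l → l ≤ g →
      ρ i l * B i j * (ρ i l)⁻¹ = (ρ j l)⁻¹ * (B i j)⁻¹ * ρ j l)
    (a : ℕ → G) (ha : ∀ k, a k = ρ k (g - 1) * ρ k g) :
    ∀ j k, 1 ≤ j → j < k → k ≤ n →
      a j * B j k * (a j)⁻¹ = (a k)⁻¹ * B j k * a k := by
  intro j k hj hjk hkn
  rw [ha, ha]
  exact mul_conj_eq_of_conj_eq_inv_conj
    (hb1 j k (g - 1) g hj hjk hkn (by omega) (by omega) le_rfl)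
    (hd2 j k (g - 1) hj hjk hkn (by omega) (by omega))
    (hd2 j k g hj hjk hkn (by omega) le_rfl)

/-- In a group with elements `B i j` (`1 ≤ i < j ≤ n`) and `ρ k l` (`1 ≤ k ≤ n`,
`1 ≤ l ≤ g`) satisfying relations (b₁) and (d₂), one has
`aⱼ B_{j,k} aⱼ⁻¹ = aₖ⁻¹ B_{j,k} aₖ` for all `1 ≤ j < k ≤ n`, where
`aₘ = ρ_{m,g-1} ρ_{m,g}`. -/
theorem statement12 {G : Type*} [Group G] (n g : ℕ) (hn : 1 ≤ n) (hg : 2 ≤ g)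
    (B : ℕ → ℕ → G) (ρ : ℕ → ℕ → G)
    (hb1 : ∀ i j k l, 1 ≤ i → i < j → j ≤ n → 1 ≤ k → k < l → l ≤ g →
      ρ i k * ρ j l * (ρ i k)⁻¹ = ρ j l)
    (hd2 : ∀ i j l, 1 ≤ i → i < j → j ≤ n → 1 ≤ l → l ≤ g →
      ρ i l * B i j * (ρ i l)⁻¹ = (ρ j l)⁻¹ * (B i j)⁻¹ * ρ j l)
    (a : ℕ → G) (ha : ∀ k, a k = ρ k (g - 1) * ρ k g) :
    ∀ j k, 1 ≤ j → j < k → k ≤ n →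
      a j * B j k * (a j)⁻¹ = (a k)⁻¹ * B j k * a k :=
  statement12_general n g hg B ρ hb1 hd2 a ha
end

section
/- Fix integers n ≥ 1 and g ≥ 2. Let G be a group with elements B_{i,j} (1 ≤ i < j ≤ n) and ρ_{k,l} (1 ≤ k ≤ n, 1 ≤ l ≤ g) satisfying: (b₁): ρ_{i,k} ρ_{j,l} ρ_{i,k}⁻¹ = ρ_{j,l} for all 1 ≤ i < j ≤ n and 1 ≤ k < l ≤ g; (d₁): ρ_{k,l} B_{i,j} ρ_{k,l}⁻¹ = B_{i,j} for all 1 ≤ i < j ≤ n, 1 ≤ l ≤ g and all k with k < i or j < k; (d₂): ρ_{i,l} B_{i,j} ρ_{i,l}⁻¹ = ρ_{j,l}⁻¹ B_{i,j}⁻¹ ρ_{j,l} for all 1 ≤ i < j ≤ n and 1 ≤ l ≤ g; and (g): a_k a_j a_k⁻¹ commutes with B_{i,k} for all 1 ≤ i < j < k ≤ n, where a_k = ρ_{k,g−1} ρ_{k,g}. Then the product a_n a_{n−1} ⋯ a_1 commutes with B_{j,k} for all 1 ≤ j < k ≤ n. -/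
/-!
Conjugation by `aₘ` fixes `b = B_{j,k}` whenever `m < j` or `k < m`, by (d₁). By (d₂), applied twice
with the double inversion cancelling thanks to (b₁), conjugation by `a_j` turns `b` into
`c = a_k⁻¹ b a_k`; by (g), the `aₘ` with `j < m < k` commute with `c`; and conjugation by `a_k`
turns `c` back into `b`. Reading `aₙ ⋯ a₁` from the right, `b` is therefore carried to itself.
-/

section DescProd

variable {M : Type*} [Monoid M]

def descProd (f : ℕ → M) (m : ℕ) : M :=
  ((List.range m).map fun i => f (m - i)).prod

theorem descProd_succ (f : ℕ → M) (m : ℕ) : descProd f (m + 1) = f (m + 1) * descProd f m := by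
  simp [descProd, List.range_succ_eq_map, Function.comp_def]

theorem semiconjBy_descProd_of_commute {f : ℕ → M} {x y : M} {lo hi : ℕ} (hle : lo ≤ hi)
    (hlo : SemiconjBy (descProd f lo) x y) (hf : ∀ m, lo < m → m ≤ hi → Commute (f m) y) :
    SemiconjBy (descProd f hi) x y := by
  induction hi, hle using Nat.le_induction with
  | base => exact hlo
  | succ m hm ih =>
    rw [descProd_succ]
    exact SemiconjBy.mul_left (hf (m + 1) (by omega) le_rfl) (ih fun i h₁ h₂ => hf i h₁ (by omega))

theorem commute_descProd_of_semiconjBy {f : ℕ → M} {x y : M} {j k n : ℕ}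
    (hj : 1 ≤ j) (hjk : j < k) (hkn : k ≤ n)
    (hout : ∀ m, 1 ≤ m → m ≤ n → (m < j ∨ k < m) → Commute (f m) x)
    (hfj : SemiconjBy (f j) x y) (hmid : ∀ m, j < m → m < k → Commute (f m) y)
    (hfk : SemiconjBy (f k) y x) :
    Commute (descProd f n) x := by
  have below : Commute (descProd f (j - 1)) x :=
    semiconjBy_descProd_of_commute (Nat.zero_le _) (Commute.one_left x)
      fun m h₁ h₂ => hout m h₁ (by omega) (Or.inl (by omega))
  have upto_j : SemiconjBy (descProd f j) x y := by
    obtain ⟨i, rfl⟩ : ∃ i, j = i + 1 := ⟨j - 1, by omega⟩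
    rw [descProd_succ]
    exact hfj.mul_left below
  have before_k : SemiconjBy (descProd f (k - 1)) x y :=
    semiconjBy_descProd_of_commute (by omega) upto_j fun m h₁ h₂ => hmid m h₁ (by omega)
  have upto_k : Commute (descProd f k) x := by
    obtain ⟨i, rfl⟩ : ∃ i, k = i + 1 := ⟨k - 1, by omega⟩
    rw [descProd_succ]
    exact hfk.mul_left before_k
  exact semiconjBy_descProd_of_commute hkn upto_k
    fun m h₁ h₂ => hout m (by omega) h₂ (Or.inr h₁)

end DescProd

section Conjugation

variable {G : Type*} [Group G]

theorem semiconjBy_of_mul_inv_eq {a x y : G} (h : a * x * a⁻¹ = y) : SemiconjBy a x y :=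
  mul_inv_eq_iff_eq_mul.mp h

theorem semiconjBy_mul_conj_of_semiconjBy_conj_inv {x₁ x₂ y₁ y₂ b : G} (h₁₂ : Commute x₁ y₂)
    (h₁ : SemiconjBy x₁ b (y₁⁻¹ * b⁻¹ * y₁)) (h₂ : SemiconjBy x₂ b (y₂⁻¹ * b⁻¹ * y₂)) :
    SemiconjBy (x₁ * x₂) b ((y₁ * y₂)⁻¹ * b * (y₁ * y₂)) := by
  have h : SemiconjBy x₁ (y₂⁻¹ * b⁻¹ * y₂) (y₂⁻¹ * (y₁⁻¹ * b⁻¹ * y₁)⁻¹ * y₂) :=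
    SemiconjBy.mul_right (SemiconjBy.mul_right h₁₂.inv_right h₁.inv_right) h₁₂
  rw [show (y₁ * y₂)⁻¹ * b * (y₁ * y₂) = y₂⁻¹ * (y₁⁻¹ * b⁻¹ * y₁)⁻¹ * y₂ by group]
  exact h.mul_left h₂

theorem commute_inv_conj_of_commute_conj {x y b : G} (h : Commute (x * y * x⁻¹) b) :
    Commute y (x⁻¹ * b * x) := by
  simpa [mul_assoc] using h.conj x⁻¹

end Conjugation

theorem statement13_general {G : Type*} [Group G] (n g : ℕ) (hg : 2 ≤ g)
    (B : ℕ → ℕ → G) (ρ : ℕ → ℕ → G)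
    (hb1 : ∀ i j k l, 1 ≤ i → i < j → j ≤ n → 1 ≤ k → k < l → l ≤ g →
      ρ i k * ρ j l * (ρ i k)⁻¹ = ρ j l)
    (hd1 : ∀ i j k l, 1 ≤ i → i < j → j ≤ n → 1 ≤ k → k ≤ n → 1 ≤ l → l ≤ g →
      (k < i ∨ j < k) → ρ k l * B i j * (ρ k l)⁻¹ = B i j)
    (hd2 : ∀ i j l, 1 ≤ i → i < j → j ≤ n → 1 ≤ l → l ≤ g →
      ρ i l * B i j * (ρ i l)⁻¹ = (ρ j l)⁻¹ * (B i j)⁻¹ * ρ j l)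
    (a : ℕ → G) (ha : ∀ k, a k = ρ k (g - 1) * ρ k g)
    (hcg : ∀ i j k, 1 ≤ i → i < j → j < k → k ≤ n →
      (a k * a j * (a k)⁻¹) * B i k = B i k * (a k * a j * (a k)⁻¹)) :
    ∀ j k, 1 ≤ j → j < k → k ≤ n →
      (((List.range n).map fun i => a (n - i)).prod) * B j k =
        B j k * (((List.range n).map fun i => a (n - i)).prod) := by
  intro j k hj hjk hkn
  refine commute_descProd_of_semiconjBy (y := (a k)⁻¹ * B j k * a k) hj hjk hkn ?_ ?_ ?_ ?_
  · intro m h₁ h₂ hm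
    rw [ha m]
    exact SemiconjBy.mul_left
      (semiconjBy_of_mul_inv_eq (hd1 j k m _ hj hjk hkn h₁ h₂ (by omega) (by omega) hm))
      (semiconjBy_of_mul_inv_eq (hd1 j k m _ hj hjk hkn h₁ h₂ (by omega) le_rfl hm))
  · rw [ha j, ha k]
    exact semiconjBy_mul_conj_of_semiconjBy_conj_inv
      (semiconjBy_of_mul_inv_eq (hb1 j k _ _ hj hjk hkn (by omega) (by omega) le_rfl))
      (semiconjBy_of_mul_inv_eq (hd2 j k _ hj hjk hkn (by omega) (by omega)))
      (semiconjBy_of_mul_inv_eq (hd2 j k _ hj hjk hkn (by omega) le_rfl))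
  · exact fun m h₁ h₂ => commute_inv_conj_of_commute_conj (hcg j m k hj h₁ h₂ hkn)
  · simp [SemiconjBy, ← mul_assoc]

/-- Relation (h): in a group with elements `B i j` (`1 ≤ i < j ≤ n`) and `ρ k l`
(`1 ≤ k ≤ n`, `1 ≤ l ≤ g`) satisfying relations (b₁), (d₁), (d₂) and (g), the product
`aₙ a_{n-1} ⋯ a₁` (where `aₖ = ρ_{k,g-1} ρ_{k,g}`) commutes with `B_{j,k}` for all
`1 ≤ j < k ≤ n`. -/
theorem statement13 {G : Type*} [Group G] (n g : ℕ) (hn : 1 ≤ n) (hg : 2 ≤ g)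
    (B : ℕ → ℕ → G) (ρ : ℕ → ℕ → G)
    (hb1 : ∀ i j k l, 1 ≤ i → i < j → j ≤ n → 1 ≤ k → k < l → l ≤ g →
      ρ i k * ρ j l * (ρ i k)⁻¹ = ρ j l)
    (hd1 : ∀ i j k l, 1 ≤ i → i < j → j ≤ n → 1 ≤ k → k ≤ n → 1 ≤ l → l ≤ g →
      (k < i ∨ j < k) → ρ k l * B i j * (ρ k l)⁻¹ = B i j)
    (hd2 : ∀ i j l, 1 ≤ i → i < j → j ≤ n → 1 ≤ l → l ≤ g →
      ρ i l * B i j * (ρ i l)⁻¹ = (ρ j l)⁻¹ * (B i j)⁻¹ * ρ j l)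
    (a : ℕ → G) (ha : ∀ k, a k = ρ k (g - 1) * ρ k g)
    (hcg : ∀ i j k, 1 ≤ i → i < j → j < k → k ≤ n →
      (a k * a j * (a k)⁻¹) * B i k = B i k * (a k * a j * (a k)⁻¹)) :
    ∀ j k, 1 ≤ j → j < k → k ≤ n →
      (((List.range n).map fun i => a (n - i)).prod) * B j k =
        B j k * (((List.range n).map fun i => a (n - i)).prod) :=
  statement13_general n g hg B ρ hb1 hd1 hd2 a ha hcg
end

section
/- Let g ≥ 3 and let G be a group with elements ρ_1, …, ρ_g, U and T satisfying: (i) U ρ_l = ρ_l U for all 1 ≤ l ≤ g−2; (ii) ρ_{g−1}⁻¹ U ρ_{g−1} = T⁻¹ U; (iii) (U ρ_{g−1} ρ_g) T = T (U ρ_{g−1} ρ_g); and (iv) ρ_1² ρ_2² ⋯ ρ_g² = T. Then ρ_1² ⋯ ρ_{g−3}² · (ρ_{g−2} U⁻¹)² · (U ρ_{g−1})² · (ρ_g T⁻¹)² = 1, where the product ρ_1² ⋯ ρ_{g−3}² is understood to be 1 when g = 3. -/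
/-!
Write `a = ρ_{g-2}`, `b = ρ_{g-1}`, `c = ρ_g` and `P = ρ₁² ⋯ ρ_{g-3}²`. Since `U` commutes with `a`,
`(a U⁻¹)² = a² U⁻²`. Relation (ii) reads `b T⁻¹ U = U b`, and with (iii) it lets `U` be carried
through `(U b)² (c T⁻¹)²`, giving `U² b² c² T⁻¹`. The product is therefore `P a² b² c² T⁻¹ = T T⁻¹`.
-/

section

variable {G : Type*} [Group G]

lemma List.prod_map_range_add_three (f : ℕ → G) (k : ℕ) :
    ((List.range (k + 3)).map f).prod = ((List.range k).map f).prod * f k * f (k + 1) * f (k + 2) := by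
  simp only [List.prod_range_succ]

lemma mul_inv_sq_of_commute {a U : G} (hUa : Commute U a) : (a * U⁻¹) ^ 2 = a ^ 2 * (U ^ 2)⁻¹ := by
  rw [(hUa.symm.inv_right).mul_pow, inv_pow]

lemma mul_sq_mul_mul_inv_sq {b c U T : G} (hb : b⁻¹ * U * b = T⁻¹ * U)
    (hT : Commute (U * b * c) T) :
    (U * b) ^ 2 * (c * T⁻¹) ^ 2 = U ^ 2 * b ^ 2 * c ^ 2 * T⁻¹ := by
  have hbU : b * T⁻¹ * U = U * b := by rw [mul_assoc, ← hb]; group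
  simp only [sq]
  calc U * b * (U * b) * (c * T⁻¹ * (c * T⁻¹)) = U * b * ((U * b * c) * T⁻¹) * c * T⁻¹ := by group
    _ = U * (b * T⁻¹ * U) * b * (c * c) * T⁻¹ := by rw [(hT.inv_right).eq]; group
    _ = U * U * (b * b) * (c * c) * T⁻¹ := by rw [hbU]; group

lemma mul_sq_eq_one_of_relations {P a b c U T : G} (hUa : Commute U a)
    (hb : b⁻¹ * U * b = T⁻¹ * U) (hT : Commute (U * b * c) T)
    (hP : P * a ^ 2 * b ^ 2 * c ^ 2 = T) :
    P * (a * U⁻¹) ^ 2 * (U * b) ^ 2 * (c * T⁻¹) ^ 2 = 1 := by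
  calc P * (a * U⁻¹) ^ 2 * (U * b) ^ 2 * (c * T⁻¹) ^ 2
      = P * (a * U⁻¹) ^ 2 * ((U * b) ^ 2 * (c * T⁻¹) ^ 2) := by rw [mul_assoc]
    _ = P * (a ^ 2 * (U ^ 2)⁻¹) * (U ^ 2 * b ^ 2 * c ^ 2 * T⁻¹) := by
      rw [mul_inv_sq_of_commute hUa, mul_sq_mul_mul_inv_sq hb hT]
    _ = (P * a ^ 2 * b ^ 2 * c ^ 2) * T⁻¹ := by group
    _ = 1 := by rw [hP, mul_inv_cancel]

end

/-- The computation behind the algebraic section `σ : π₁(N_g) → P_n(N_g)`: in a group with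
elements `ρ₁, …, ρ_g, U, T` satisfying (i) `U` commutes with `ρ_l` for `l ≤ g - 2`,
(ii) `ρ_{g-1}⁻¹ U ρ_{g-1} = T⁻¹ U`, (iii) `U ρ_{g-1} ρ_g` commutes with `T`, and
(iv) `ρ₁² ⋯ ρ_g² = T`, one has
`ρ₁² ⋯ ρ_{g-3}² (ρ_{g-2} U⁻¹)² (U ρ_{g-1})² (ρ_g T⁻¹)² = 1`. -/
theorem statement15 {G : Type*} [Group G] (g : ℕ) (hg : 3 ≤ g)
    (ρ : ℕ → G) (U T : G)
    (h1 : ∀ l, 1 ≤ l → l ≤ g - 2 → U * ρ l = ρ l * U)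
    (h2 : (ρ (g - 1))⁻¹ * U * ρ (g - 1) = T⁻¹ * U)
    (h3 : (U * ρ (g - 1) * ρ g) * T = T * (U * ρ (g - 1) * ρ g))
    (h4 : (((List.range g).map fun i => ρ (i + 1) ^ 2).prod) = T) :
    (((List.range (g - 3)).map fun i => ρ (i + 1) ^ 2).prod) *
      (ρ (g - 2) * U⁻¹) ^ 2 * (U * ρ (g - 1)) ^ 2 * (ρ g * T⁻¹) ^ 2 = 1 := by
  obtain ⟨k, rfl⟩ := Nat.exists_eq_add_of_le' hg
  simp only [show k + 3 - 3 = k by omega, show k + 3 - 2 = k + 1 by omega,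
    show k + 3 - 1 = k + 2 by omega] at h1 h2 h3 ⊢
  rw [List.prod_map_range_add_three] at h4
  exact mul_sq_eq_one_of_relations (h1 (k + 1) (Nat.le_add_left 1 k) le_rfl) h2 h3 h4
end
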